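/- arXiv:2008.09636 — 3 statements merged into one kernel-verified Lean document; each statement's English description precedes it below -/
import Mathlib

section
/- Let X be a topological space carrying a topological action r_1, …, r_{n−1} of TL_n(1). Suppose x ∈ A_i ∩ A_{i+1} for some 1 ≤ i ≤ n−2, i.e., r_i(x) = x and r_{i+1}(x) = x. Then r_j(x) = x for every 1 ≤ j ≤ n−1; that is, x lies in the full intersection Q = A_1 ∩ A_2 ∩ ⋯ ∩ A_{n−1}. -/
/-- A topological action of the Temperley–Lieb monoid `TL_n(1)` on a topological space
`X`: continuous maps `r 1, …, r (n-1) : X → X` satisfying the idempotent, neighbor and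
long-distance Temperley–Lieb relations.  For each valid index `i`, `A_i` is the image
`Set.range (r i)`, which coincides with the fixed-point set of `r i`. -/
structure TLAction (n : ℕ) (X : Type*) [TopologicalSpace X] where
  r : ℕ → X → X
  continuous : ∀ i, 1 ≤ i → i ≤ n - 1 → Continuous (r i)
  idem : ∀ i, 1 ≤ i → i ≤ n - 1 → r i ∘ r i = r i
  neighbor₁ : ∀ i, 1 ≤ i → i + 1 ≤ n - 1 → r i ∘ r (i + 1) ∘ r i = r i
  neighbor₂ : ∀ i, 1 ≤ i → i + 1 ≤ n - 1 → r (i + 1) ∘ r i ∘ r (i + 1) = r (i + 1)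
  longdist : ∀ i j, 1 ≤ i → i ≤ n - 1 → 1 ≤ j → j ≤ n - 1 →
    (i + 2 ≤ j ∨ j + 2 ≤ i) → r i ∘ r j = r j ∘ r i

/-- Upward step: if `x` is fixed by `r j` and `r (j+1)`, it is fixed by `r (j+2)`. -/
lemma TLAction.up_step {n : ℕ} {X : Type*} [TopologicalSpace X] (A : TLAction n X)
    (j : ℕ) (hj1 : 1 ≤ j) (hj2 : j + 2 ≤ n - 1) (x : X)
    (h1 : A.r j x = x) (h2 : A.r (j + 1) x = x) : A.r (j + 2) x = x := by
  have cms : ∀ y, A.r j (A.r (j + 2) y) = A.r (j + 2) (A.r j y) := fun y =>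
    congrFun (A.longdist j (j + 2) hj1 (by omega) (by omega) hj2 (Or.inl le_rfl)) y
  have n1 : ∀ y, A.r j (A.r (j + 1) (A.r j y)) = A.r j y := fun y =>
    congrFun (A.neighbor₁ j hj1 (by omega)) y
  have n2 : ∀ y, A.r (j + 1) (A.r (j + 2) (A.r (j + 1) y)) = A.r (j + 1) y := fun y =>
    congrFun (A.neighbor₁ (j + 1) (by omega) (by omega)) y
  calc A.r (j + 2) x = A.r (j + 2) (A.r j x) := by rw [h1]
    _ = A.r j (A.r (j + 2) x) := (cms x).symm
    _ = A.r j (A.r (j + 1) (A.r j (A.r (j + 2) x))) := (n1 _).symm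
    _ = A.r j (A.r (j + 1) (A.r (j + 2) (A.r j x))) := by rw [cms]
    _ = A.r j (A.r (j + 1) (A.r (j + 2) x)) := by rw [h1]
    _ = A.r j (A.r (j + 1) (A.r (j + 2) (A.r (j + 1) x))) := by rw [h2]
    _ = A.r j (A.r (j + 1) x) := by rw [n2]
    _ = A.r j x := by rw [h2]
    _ = x := h1

/-- Downward step: if `x` is fixed by `r (k+1)` and `r (k+2)`, it is fixed by `r k`. -/
lemma TLAction.down_step {n : ℕ} {X : Type*} [TopologicalSpace X] (A : TLAction n X)
    (k : ℕ) (hk1 : 1 ≤ k) (hk2 : k + 2 ≤ n - 1) (x : X)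
    (h1 : A.r (k + 1) x = x) (h2 : A.r (k + 2) x = x) : A.r k x = x := by
  have cms : ∀ y, A.r k (A.r (k + 2) y) = A.r (k + 2) (A.r k y) := fun y =>
    congrFun (A.longdist k (k + 2) hk1 (by omega) (by omega) hk2 (Or.inl le_rfl)) y
  have n2 : ∀ y, A.r (k + 2) (A.r (k + 1) (A.r (k + 2) y)) = A.r (k + 2) y := fun y =>
    congrFun (A.neighbor₂ (k + 1) (by omega) (by omega)) y
  have n1 : ∀ y, A.r (k + 1) (A.r k (A.r (k + 1) y)) = A.r (k + 1) y := fun y =>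
    congrFun (A.neighbor₂ k hk1 (by omega)) y
  calc A.r k x = A.r k (A.r (k + 2) x) := by rw [h2]
    _ = A.r (k + 2) (A.r k x) := cms x
    _ = A.r (k + 2) (A.r (k + 1) (A.r (k + 2) (A.r k x))) := (n2 _).symm
    _ = A.r (k + 2) (A.r (k + 1) (A.r k (A.r (k + 2) x))) := by rw [cms]
    _ = A.r (k + 2) (A.r (k + 1) (A.r k x)) := by rw [h2]
    _ = A.r (k + 2) (A.r (k + 1) (A.r k (A.r (k + 1) x))) := by rw [h1]
    _ = A.r (k + 2) (A.r (k + 1) x) := by rw [n1]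
    _ = A.r (k + 2) x := by rw [h1]
    _ = x := h2

/-- (Neighbor intersection = full intersection.)  If a point of a
`TL_n(1)`-space is fixed by two neighboring retractions `r i` and `r (i+1)`, then it is
fixed by every retraction `r j`, `1 ≤ j ≤ n-1`; i.e. it lies in the full intersection
`Q = A_1 ∩ ⋯ ∩ A_{n-1}`. -/
theorem mem_full_intersection_of_mem_neighbor_intersection
    {n : ℕ} (hn : 2 ≤ n) {X : Type*} [TopologicalSpace X] (A : TLAction n X)
    (i : ℕ) (hi : 1 ≤ i) (hi' : i + 1 ≤ n - 1) (x : X)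
    (hxi : A.r i x = x) (hxi' : A.r (i + 1) x = x) :
    ∀ j, 1 ≤ j → j ≤ n - 1 → A.r j x = x := by
  have up : ∀ d, i + d ≤ n - 1 → A.r (i + d) x = x := by
    intro d
    induction d using Nat.strong_induction_on with
    | _ d ih =>
      match d with
      | 0 => intro _; simpa using hxi
      | 1 => intro _; exact hxi'
      | (d + 2) =>
        intro hle
        have h1 : A.r (i + d) x = x := ih d (by omega) (by omega)
        have h2 : A.r (i + d + 1) x = x := by
          have := ih (d + 1) (by omega) (by omega)
          simpa [Nat.add_assoc] using this
        have := A.up_step (i + d) (by omega) (by omega) x h1 h2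
        simpa [Nat.add_assoc] using this
  have down : ∀ d, d < i → A.r (i - d) x = x := by
    intro d
    induction d using Nat.strong_induction_on with
    | _ d ih =>
      match d with
      | 0 => intro _; simpa using hxi
      | 1 =>
        intro hd
        have h1 : A.r (i - 1 + 1) x = x := by
          have : i - 1 + 1 = i := by omega
          rw [this]; exact hxi
        have h2 : A.r (i - 1 + 2) x = x := by
          have : i - 1 + 2 = i + 1 := by omega
          rw [this]; exact hxi'
        exact A.down_step (i - 1) (by omega) (by omega) x h1 h2
      | (d + 2) =>
        intro hd
        have h1 : A.r (i - (d + 2) + 1) x = x := by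
          have : i - (d + 2) + 1 = i - (d + 1) := by omega
          rw [this]; exact ih (d + 1) (by omega) (by omega)
        have h2 : A.r (i - (d + 2) + 2) x = x := by
          have : i - (d + 2) + 2 = i - d := by omega
          rw [this]; exact ih d (by omega) (by omega)
        exact A.down_step (i - (d + 2)) (by omega) (by omega) x h1 h2
  intro j hj1 hj2
  rcases le_or_gt i j with h | h
  · have := up (j - i) (by omega)
    have hji : i + (j - i) = j := by omega
    rwa [hji] at this
  · have := down (i - j) (by omega)
    have hij : i - (i - j) = j := by omega
    rwa [hij] at this
end

section
/- Let n be a natural number, let N = ⌊n/2⌋ with N ≥ 1, and let h : {1,…,N} → ℤ. Suppose s : {1,…,N} → ℤ satisfies the downward recursion s(N) = h(N) and, for every 1 ≤ p < N, s(p) = h(p) − Σ_{q=p+1}^{N} d_{n−2p, q−p} · s(q). Then for every 1 ≤ p ≤ N: s(p) = h(p) + Σ_{q=p+1}^{N} ( Σ_{λ ∈ Comp(q−p)} (−1)^{row(λ)} · d^{n−2p}_λ ) · h(q). -/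
/-- `tlDim n p = C(n,p) - C(n,p-1) ∈ ℤ`, the quantity `d_{n,p}` (the dimension of the
standard Temperley–Lieb module `V_{n,p}`); binomial coefficients vanish when the lower
index exceeds the upper. -/
def tlDim (n p : ℕ) : ℤ := (n.choose p : ℤ) - (n.choose (p - 1) : ℤ)

/-- For `r : ℕ` and a composition `λ = [i₁, …, i_l]`,
`dPow r λ = ∏_{c=1}^{l} d_{r ∸ 2(i₁ + ⋯ + i_{c-1}), i_c}`, where `∸` is truncated
subtraction on `ℕ` (here realized by the recursion `(r - 2 i₁) - 2 i₂ - ⋯`). -/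
def dPow : ℕ → List ℕ → ℤ
  | _, [] => 1
  | r, i :: t => tlDim r i * dPow (r - 2 * i) t

/-- `compositions m` is the finite set of compositions of `m`: ordered lists of positive
integers summing to `m` (for `m = 0` this is just the empty composition).  A composition
of `m ≥ 1` is a first part `j ≥ 1` (here `j = m - k` with `k < m`) followed by a
composition of `m - j`. -/
def compositions : ℕ → Finset (List ℕ)
  | 0 => {[]}
  | m + 1 =>
    (Finset.range (m + 1)).attach.biUnion
      (fun k => (compositions k.1).image (List.cons (m + 1 - k.1)))
decreasing_by exact Finset.mem_range.mp k.2

/-!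
The recursion is a unitriangular linear system `s = h - A s` with `A p q = d_{n-2p, q-p}`
for `p < q`. Its inverse `C = (1 + A)⁻¹` is again unitriangular and is characterised by
`C p q = -∑_{p < r ≤ q} A p r · C r q`. Splitting off the first part of a composition shows
that the signed composition sums `∑_{λ ∈ Comp(q-p)} (-1)^{row λ} d^{n-2p}_λ` satisfy exactly
this recursion, because the truncated shifts `n - 2p - 2(r - p)` and `n - 2r` agree.
-/

open Finset

theorem eq_sum_Icc_mul_of_recursion {R : Type*} [Ring R] (a c : ℕ → ℕ → R) (h s : ℕ → R) (lo N : ℕ)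
    (hc_diag : ∀ p, c p p = 1)
    (hc : ∀ p q, p < q → c p q = -∑ r ∈ Ioc p q, a p r * c r q)
    (hs : ∀ p, lo ≤ p → p ≤ N → s p = h p - ∑ q ∈ Ioc p N, a p q * s q) :
    ∀ p, lo ≤ p → p ≤ N → s p = ∑ q ∈ Icc p N, c p q * h q := by
  intro p hlo hpN
  induction hd : N - p using Nat.strong_induction_on generalizing p with
  | _ d ih =>
    have hs_above : ∀ q ∈ Ioc p N, s q = ∑ r ∈ Icc q N, c q r * h r := fun q hq => by
      have hq := mem_Ioc.mp hq
      exact ih (N - q) (by omega) q (by omega) hq.2 rfl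
    have hswap : ∑ q ∈ Ioc p N, a p q * ∑ r ∈ Icc q N, c q r * h r =
        ∑ r ∈ Ioc p N, (∑ q ∈ Ioc p r, a p q * c q r) * h r := by
      simp only [mul_sum, sum_mul, mul_assoc]
      exact sum_comm' (fun q r => by simp only [mem_Ioc, mem_Icc]; omega)
    calc s p = h p - ∑ r ∈ Ioc p N, (∑ q ∈ Ioc p r, a p q * c q r) * h r := by
          rw [hs p hlo hpN, sum_congr rfl fun q hq => by rw [hs_above q hq], hswap]
      _ = c p p * h p + ∑ r ∈ Ioc p N, c p r * h r := by
          rw [hc_diag, one_mul, sub_eq_add_neg, ← sum_neg_distrib]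
          congr 1
          exact sum_congr rfl fun r hr => by rw [hc p r (mem_Ioc.mp hr).1, neg_mul]
      _ = ∑ q ∈ Icc p N, c p q * h q := by
          rw [Icc_eq_cons_Ioc (by omega), sum_cons]

theorem sum_compositions_succ {M : Type*} [AddCommMonoid M] (f : List ℕ → M) (m : ℕ) :
    ∑ L ∈ compositions (m + 1), f L =
      ∑ k ∈ range (m + 1), ∑ L ∈ compositions k, f ((m + 1 - k) :: L) := by
  rw [compositions, sum_biUnion]
  · rw [sum_attach (range (m + 1))
      (fun k => ∑ L ∈ (compositions k).image (List.cons (m + 1 - k)), f L)]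
    exact sum_congr rfl fun k _ => sum_image fun _ _ _ _ hL => List.cons_injective hL
  · intro k _ k' _ hkk'
    simp only [Function.onFun, disjoint_left, mem_image]
    rintro _ ⟨L, -, rfl⟩ ⟨L', -, hL'⟩
    have hfirst := List.head_eq_of_cons_eq hL'
    have := mem_range.mp k.2
    have := mem_range.mp k'.2
    exact hkk' (Subtype.ext (by omega))

def compCoeff (r m : ℕ) : ℤ := ∑ L ∈ compositions m, (-1) ^ L.length * dPow r L

theorem compCoeff_zero (r : ℕ) : compCoeff r 0 = 1 := by
  simp [compCoeff, compositions, dPow]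

theorem compCoeff_succ (r m : ℕ) :
    compCoeff r (m + 1) =
      -∑ k ∈ range (m + 1), tlDim r (m + 1 - k) * compCoeff (r - 2 * (m + 1 - k)) k := by
  simp only [compCoeff, sum_compositions_succ, mul_sum, ← sum_neg_distrib, List.length_cons,
    dPow, pow_succ]
  exact sum_congr rfl fun _ _ => sum_congr rfl fun _ _ => by ring

theorem compCoeff_sub_of_lt (n p q : ℕ) (hpq : p < q) :
    compCoeff (n - 2 * p) (q - p) =
      -∑ r ∈ Ioc p q, tlDim (n - 2 * p) (r - p) * compCoeff (n - 2 * r) (q - r) := by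
  obtain ⟨m, hm⟩ : ∃ m, q - p = m + 1 := ⟨q - p - 1, by omega⟩
  rw [hm, compCoeff_succ]
  congr 1
  refine sum_nbij' (fun k => q - k) (fun r => q - r) ?_ ?_ ?_ ?_ ?_
  · intro k hk; simp only [mem_range, mem_Ioc] at hk ⊢; omega
  · intro r hr; simp only [mem_range, mem_Ioc] at hr ⊢; omega
  · intro k hk; simp only [mem_range] at hk; omega
  · intro r hr; simp only [mem_Ioc] at hr; omega
  · intro k hk
    have hk := mem_range.mp hk
    -- truncated subtraction: both shifts are `0` when `n < 2 (q - k)`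
    rw [show q - (q - k) = k by omega, show m + 1 - k = q - k - p by omega,
      show n - 2 * p - 2 * (q - k - p) = n - 2 * (q - k) by omega]

theorem recursion_closed_form_general (n N : ℕ) (h s : ℕ → ℤ)
    (hbase : s N = h N)
    (hrec : ∀ p, 1 ≤ p → p < N →
      s p = h p - ∑ q ∈ Finset.Ioc p N, tlDim (n - 2 * p) (q - p) * s q) :
    ∀ p, 1 ≤ p → p ≤ N →
      s p = h p + ∑ q ∈ Finset.Ioc p N,
        (∑ L ∈ compositions (q - p), (-1) ^ L.length * dPow (n - 2 * p) L) * h q := by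
  have hrec' : ∀ p, 1 ≤ p → p ≤ N →
      s p = h p - ∑ q ∈ Ioc p N, tlDim (n - 2 * p) (q - p) * s q := by
    intro p hp hpN
    rcases hpN.lt_or_eq with hpN | rfl
    · exact hrec p hp hpN
    · simpa using hbase
  intro p hp hpN
  rw [eq_sum_Icc_mul_of_recursion (fun p q => tlDim (n - 2 * p) (q - p))
    (fun p q => compCoeff (n - 2 * p) (q - p)) h s 1 N (by simp [compCoeff_zero])
    (fun p q hpq => compCoeff_sub_of_lt n p q hpq) hrec' p hp hpN,
    Icc_eq_cons_Ioc hpN, sum_cons, Nat.sub_self, compCoeff_zero, one_mul]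
  rfl

/-- The downward recursion
`s N = h N`, `s p = h p - Σ_{q=p+1}^{N} d_{n-2p, q-p} · s q`
has the closed-form solution
`s p = h p + Σ_{q=p+1}^{N} (Σ_{λ ∈ Comp(q-p)} (-1)^{row λ} · d^{n-2p}_λ) · h q`
for all `1 ≤ p ≤ N`, where `N = ⌊n/2⌋ ≥ 1`. -/
theorem recursion_closed_form (n N : ℕ) (hN : N = n / 2) (hN1 : 1 ≤ N) (h s : ℕ → ℤ)
    (hbase : s N = h N)
    (hrec : ∀ p, 1 ≤ p → p < N →
      s p = h p - ∑ q ∈ Finset.Ioc p N, tlDim (n - 2 * p) (q - p) * s q) :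
    ∀ p, 1 ≤ p → p ≤ N →
      s p = h p + ∑ q ∈ Finset.Ioc p N,
        (∑ L ∈ compositions (q - p), (-1) ^ L.length * dPow (n - 2 * p) L) * h q :=
  recursion_closed_form_general n N h s hbase hrec
end

section
/- Let X be a topological space and let r, r' : X → X be continuous idempotent maps (r ∘ r = r, r' ∘ r' = r') which commute: r ∘ r' = r' ∘ r. Let R = r(X) and R' = r'(X). Suppose α ∈ H_k(R; ℤ) and α' ∈ H_k(R'; ℤ) are homology classes whose images in H_k(X; ℤ) under the inclusion-induced maps are equal. Then there exists β ∈ H_k(R ∩ R'; ℤ) whose image in H_k(X; ℤ) under the inclusion-induced map equals this common image. -/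
open CategoryTheory

/-- The singular chain complex of a topological space: the alternating face map complex
of the levelwise free `ℤ`-module on the singular simplicial set. -/
noncomputable def singularChainComplexFunctor :
    TopCat.{0} ⥤ ChainComplex (ModuleCat.{0} ℤ) ℕ :=
  TopCat.toSSet ⋙
    ((CategoryTheory.SimplicialObject.whiskering _ _).obj (ModuleCat.free ℤ)) ⋙
    AlgebraicTopology.alternatingFaceMapComplex (ModuleCat.{0} ℤ)

/-- Singular homology `H_k(−; ℤ)` with integer coefficients, as a functor
`TopCat ⥤ ModuleCat ℤ`. -/
noncomputable def singularHomologyFunctor (k : ℕ) : TopCat.{0} ⥤ ModuleCat.{0} ℤ :=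
  singularChainComplexFunctor ⋙ HomologicalComplex.homologyFunctor _ _ k

/-- The map `H_k(S; ℤ) → H_k(X; ℤ)` induced by the inclusion of a subspace `S ⊆ X`
(with its subspace topology). -/
noncomputable def inclusionInducedMap (k : ℕ) {X : Type} [TopologicalSpace X]
    (S : Set X) :
    (singularHomologyFunctor k).obj (TopCat.of S) ⟶
      (singularHomologyFunctor k).obj (TopCat.of X) :=
  (singularHomologyFunctor k).map (TopCat.ofHom ⟨Subtype.val, continuous_subtype_val⟩)

/-! A retraction `r'` of `X` onto `R'` that commutes with `r` maps `R = r(X)` into `R ∩ R'`, so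
`β := r'_* α` is a class on the intersection. Its image in `X` is `r'_*` of the common image
`ι_* α = ι'_* α'`, and `r'_*` fixes the latter because `r'` is the identity on `R'`. -/

section InclusionInducedMap

variable (k : ℕ) {X Y : Type} [TopologicalSpace X] [TopologicalSpace Y]

theorem inclusionInducedMap_map_restrict (f : C(X, Y)) {S : Set X} {T : Set Y}
    (hST : Set.MapsTo f S T)
    (a : (singularHomologyFunctor k).obj (TopCat.of S)) :
    inclusionInducedMap k T
        ((singularHomologyFunctor k).map (TopCat.ofHom ⟨hST.restrict f S T,
          f.continuous.restrict hST⟩) a) =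
      (singularHomologyFunctor k).map (TopCat.ofHom f) (inclusionInducedMap k S a) := by
  simp only [inclusionInducedMap, ← ConcreteCategory.comp_apply, ← Functor.map_comp]
  rfl

theorem map_inclusionInducedMap_of_eqOn_id (f : C(X, X)) {S : Set X} (hf : Set.EqOn f id S)
    (a : (singularHomologyFunctor k).obj (TopCat.of S)) :
    (singularHomologyFunctor k).map (TopCat.ofHom f) (inclusionInducedMap k S a) =
      inclusionInducedMap k S a := by
  have hcomp : (TopCat.ofHom ⟨Subtype.val, continuous_subtype_val⟩ : TopCat.of S ⟶ TopCat.of X)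
      ≫ TopCat.ofHom f = TopCat.ofHom ⟨Subtype.val, continuous_subtype_val⟩ := by
    ext x
    exact hf x.2
  rw [inclusionInducedMap, ← ConcreteCategory.comp_apply, ← Functor.map_comp, hcomp]

end InclusionInducedMap

theorem homologous_classes_live_in_intersection_general {X : Type} [TopologicalSpace X]
    (r r' : X → X) (hr'c : Continuous r')
    (hr' : r' ∘ r' = r') (hcomm : r ∘ r' = r' ∘ r) (k : ℕ)
    (α : (singularHomologyFunctor k).obj (TopCat.of (Set.range r)))
    (α' : (singularHomologyFunctor k).obj (TopCat.of (Set.range r')))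
    (heq : inclusionInducedMap k (Set.range r) α
      = inclusionInducedMap k (Set.range r') α') :
    ∃ β : (singularHomologyFunctor k).obj
        (TopCat.of ((Set.range r ∩ Set.range r' : Set X))),
      inclusionInducedMap k (Set.range r ∩ Set.range r') β
        = inclusionInducedMap k (Set.range r) α := by
  let f : C(X, X) := ⟨r', hr'c⟩
  have hmaps : Set.MapsTo f (Set.range r) (Set.range r ∩ Set.range r') := by
    rintro _ ⟨y, rfl⟩
    exact ⟨⟨r' y, congrFun hcomm y⟩, Set.mem_range_self (r y)⟩
  have hfix : Set.EqOn f id (Set.range r') := by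
    rintro _ ⟨y, rfl⟩
    exact congrFun hr' y
  refine ⟨(singularHomologyFunctor k).map
    (TopCat.ofHom ⟨hmaps.restrict f _ _, f.continuous.restrict hmaps⟩) α, ?_⟩
  rw [inclusionInducedMap_map_restrict, heq, map_inclusionInducedMap_of_eqOn_id k f hfix]

/-- Let `r, r' : X → X` be commuting continuous idempotents with images
`R = r(X)` and `R' = r'(X)`.  If classes `α ∈ H_k(R; ℤ)` and `α' ∈ H_k(R'; ℤ)` have the
same image in `H_k(X; ℤ)` under the inclusion-induced maps, then some class
`β ∈ H_k(R ∩ R'; ℤ)` maps to this common image. -/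
theorem homologous_classes_live_in_intersection {X : Type} [TopologicalSpace X]
    (r r' : X → X) (hrc : Continuous r) (hr'c : Continuous r')
    (hr : r ∘ r = r) (hr' : r' ∘ r' = r') (hcomm : r ∘ r' = r' ∘ r) (k : ℕ)
    (α : (singularHomologyFunctor k).obj (TopCat.of (Set.range r)))
    (α' : (singularHomologyFunctor k).obj (TopCat.of (Set.range r')))
    (heq : inclusionInducedMap k (Set.range r) α
      = inclusionInducedMap k (Set.range r') α') :
    ∃ β : (singularHomologyFunctor k).obj
        (TopCat.of ((Set.range r ∩ Set.range r' : Set X))),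
      inclusionInducedMap k (Set.range r ∩ Set.range r') β
        = inclusionInducedMap k (Set.range r) α :=
  homologous_classes_live_in_intersection_general r r' hr'c hr' hcomm k α α' heq
end
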